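/- arXiv:1612.01112 — 3 statements merged into one kernel-verified Lean document; each statement's English description precedes it below -/
import Mathlib

section
/- For every integer n ≥ 1 and every integer k with |k| ≤ n, one has a_{k,n} ≤ (πn)^{-1/2} · exp(−b_{k,n}). -/
open Real

open Stirling Filter Nat in
lemma sqrt_pi_le_stirlingSeq {m : ℕ} (hm : 1 ≤ m) : Real.sqrt π ≤ stirlingSeq m := by
  have h := stirlingSeq'_antitone.le_of_tendsto
    (tendsto_stirlingSeq_sqrt_pi.comp (tendsto_add_atTop_nat 1)) (m - 1)
  simpa [Nat.succ_eq_add_one, Nat.sub_add_cancel hm] using h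

open Stirling Nat in
lemma stirlingSeq_le_stirlingSeq {i j : ℕ} (hi : 1 ≤ i) (hij : i ≤ j) :
    stirlingSeq j ≤ stirlingSeq i := by
  have h := stirlingSeq'_antitone (a := i - 1) (b := j - 1) (by omega)
  simpa [Nat.succ_eq_add_one, Nat.sub_add_cancel hi, Nat.sub_add_cancel (hi.trans hij)] using h

open Stirling Nat in
lemma factorial_stirling (m : ℕ) (hm : 1 ≤ m) :
    (m ! : ℝ) = stirlingSeq m * (Real.sqrt (2 * (m:ℝ)) * ((m:ℝ) / Real.exp 1) ^ m) := by
  rw [stirlingSeq, div_mul_cancel₀]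
  positivity

lemma log_D (x : ℝ) (hx : 0 < x) (j : ℕ) :
    Real.log (Real.sqrt (2 * x) * (x / Real.exp 1) ^ j)
      = (Real.log 2 + Real.log x) / 2 + j * (Real.log x - 1) := by
  rw [Real.log_mul (by positivity) (by positivity), Real.log_sqrt (by positivity),
    Real.log_pow, Real.log_div (ne_of_gt hx) (Real.exp_ne_zero 1), Real.log_exp,
    Real.log_mul two_ne_zero (ne_of_gt hx)]

open Stirling Nat in
lemma key_ineq (n m p : ℕ) (hm : 1 ≤ m) (hp : 1 ≤ p) (hmp : m + p = 2 * n) :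
    ((2 * n).choose m : ℝ) * (2 : ℝ) ^ (-(2 * (n : ℤ))) ≤
      (Real.sqrt (π * n))⁻¹ *
        Real.exp (-(((m : ℝ) + 1/2) * Real.log ((m : ℝ) / n)
          + ((p : ℝ) + 1/2) * Real.log ((p : ℝ) / n))) := by
  have hn : 1 ≤ n := by omega
  have hn0 : (0:ℝ) < n := by exact_mod_cast hn
  have hm0 : (0:ℝ) < m := by exact_mod_cast hm
  have hp0 : (0:ℝ) < p := by exact_mod_cast hp
  have hm2n : m ≤ 2 * n := by omega
  have h2n : 1 ≤ 2 * n := by omega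
  have h2n0 : (0:ℝ) < ((2*n : ℕ) : ℝ) := by exact_mod_cast h2n
  set Dm := Real.sqrt (2 * (m:ℝ)) * ((m:ℝ) / Real.exp 1) ^ m with hDmdef
  set Dp := Real.sqrt (2 * (p:ℝ)) * ((p:ℝ) / Real.exp 1) ^ p with hDpdef
  set D2 := Real.sqrt (2 * ((2*n : ℕ):ℝ)) * (((2*n : ℕ):ℝ) / Real.exp 1) ^ (2*n) with hD2def
  have hDm0 : 0 < Dm := by positivity
  have hDp0 : 0 < Dp := by positivity
  have hD20 : 0 < D2 := by positivity
  have hfm : (m ! : ℝ) = stirlingSeq m * Dm := factorial_stirling m hm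
  have hfp : (p ! : ℝ) = stirlingSeq p * Dp := factorial_stirling p hp
  have hf2 : ((2*n)! : ℝ) = stirlingSeq (2*n) * D2 := factorial_stirling (2*n) h2n
  have hsq : (0:ℝ) < Real.sqrt π := Real.sqrt_pos.mpr Real.pi_pos
  have hs2 : 0 < stirlingSeq (2*n) := lt_of_lt_of_le hsq (sqrt_pi_le_stirlingSeq h2n)
  have hsm : 0 < stirlingSeq m := lt_of_lt_of_le hsq (sqrt_pi_le_stirlingSeq hm)
  have hden : stirlingSeq (2*n) * Real.sqrt π * (Dm * Dp) ≤ (m ! : ℝ) * (p ! : ℝ) := by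
    rw [hfm, hfp]
    have h1 : stirlingSeq (2*n) ≤ stirlingSeq m := stirlingSeq_le_stirlingSeq hm (by omega)
    have h2 : Real.sqrt π ≤ stirlingSeq p := sqrt_pi_le_stirlingSeq hp
    have h3 : stirlingSeq (2*n) * Real.sqrt π ≤ stirlingSeq m * stirlingSeq p :=
      mul_le_mul h1 h2 hsq.le hsm.le
    nlinarith [mul_pos hDm0 hDp0]
  have hchoose : ((2 * n).choose m : ℝ) = ((2*n)! : ℝ) / ((m ! : ℝ) * (p ! : ℝ)) := by
    have hs : 2 * n - m = p := by omega
    rw [Nat.cast_choose ℝ hm2n, hs]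
  have hmain : ((2 * n).choose m : ℝ) ≤ D2 / (Real.sqrt π * (Dm * Dp)) := by
    rw [hchoose, hf2]
    calc stirlingSeq (2*n) * D2 / ((m ! : ℝ) * (p ! : ℝ))
        ≤ stirlingSeq (2*n) * D2 / (stirlingSeq (2*n) * Real.sqrt π * (Dm * Dp)) := by
          gcongr
      _ = D2 / (Real.sqrt π * (Dm * Dp)) := by
          rw [mul_assoc, mul_div_mul_left _ _ (ne_of_gt hs2)]
  have hzp : (0:ℝ) < (2 : ℝ) ^ (-(2 * (n : ℤ))) := by positivity
  calc ((2 * n).choose m : ℝ) * (2 : ℝ) ^ (-(2 * (n : ℤ)))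
      ≤ D2 / (Real.sqrt π * (Dm * Dp)) * (2 : ℝ) ^ (-(2 * (n : ℤ))) :=
        mul_le_mul_of_nonneg_right hmain hzp.le
    _ = (Real.sqrt (π * n))⁻¹ *
        Real.exp (-(((m : ℝ) + 1/2) * Real.log ((m : ℝ) / n)
          + ((p : ℝ) + 1/2) * Real.log ((p : ℝ) / n))) := by
        have hL : (0:ℝ) < D2 / (Real.sqrt π * (Dm * Dp)) * (2 : ℝ) ^ (-(2 * (n : ℤ))) := by
          positivity
        have hR : (0:ℝ) < (Real.sqrt (π * n))⁻¹ *
            Real.exp (-(((m : ℝ) + 1/2) * Real.log ((m : ℝ) / n)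
              + ((p : ℝ) + 1/2) * Real.log ((p : ℝ) / n))) := by positivity
        apply Real.log_injOn_pos (Set.mem_Ioi.mpr hL) (Set.mem_Ioi.mpr hR)
        have hc2n : ((2*n : ℕ):ℝ) = 2 * (n:ℝ) := by push_cast; ring
        rw [Real.log_mul (by positivity) (by positivity),
          Real.log_div (ne_of_gt hD20) (by positivity),
          Real.log_mul (ne_of_gt hsq) (by positivity),
          Real.log_mul (ne_of_gt hDm0) (ne_of_gt hDp0),
          Real.log_zpow, hDmdef, hDpdef, hD2def, hc2n,
          log_D _ hm0, log_D _ hp0, log_D _ (by positivity : (0:ℝ) < 2 * (n:ℝ)),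
          Real.log_sqrt Real.pi_pos.le,
          Real.log_mul two_ne_zero (ne_of_gt hn0),
          Real.log_mul (by positivity) (Real.exp_ne_zero _),
          Real.log_inv, Real.log_exp,
          Real.log_sqrt (by positivity : (0:ℝ) ≤ π * n),
          Real.log_mul (ne_of_gt Real.pi_pos) (ne_of_gt hn0),
          Real.log_div (ne_of_gt hm0) (ne_of_gt hn0),
          Real.log_div (ne_of_gt hp0) (ne_of_gt hn0)]
        have hr : (m:ℝ) + (p:ℝ) = 2 * (n:ℝ) := by exact_mod_cast congrArg (Nat.cast : ℕ → ℝ) hmp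
        push_cast
        linear_combination (1 - Real.log (n:ℝ)) * hr

/-- `a n k = C(2n, n+k) · 2^(-2n)`: the probability that a simple symmetric random walk
is at position `2k` after `2n` steps. -/
noncomputable def a (n : ℕ) (k : ℤ) : ℝ :=
  ((2 * n).choose ((n : ℤ) + k).toNat : ℝ) * (2 : ℝ) ^ (-(2 * (n : ℤ)))

/-- `b k n`, defined by the logarithmic formula for `|k| < n`, and by
`(2n + 1/2)·log 2 − (1/2)·log(2πn)` for `|k| = n`. -/
noncomputable def b (n : ℕ) (k : ℤ) : ℝ :=
  if |k| = (n : ℤ) then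
    (2 * (n : ℝ) + 1 / 2) * Real.log 2 - (1 / 2) * Real.log (2 * Real.pi * n)
  else
    (n : ℝ) * ((1 + ((k : ℝ) + 1 / 2) / n) * Real.log (1 + (k : ℝ) / n)
      + (1 - ((k : ℝ) - 1 / 2) / n) * Real.log (1 - (k : ℝ) / n))

theorem stmt_0 (n : ℕ) (hn : 1 ≤ n) (k : ℤ) (hk : |k| ≤ (n : ℤ)) :
    a n k ≤ (Real.sqrt (Real.pi * n))⁻¹ * Real.exp (-(b n k)) := by
  have hn0 : (0:ℝ) < n := by exact_mod_cast hn
  by_cases hkn : |k| = (n : ℤ)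
  · -- boundary case: equality
    have hb : b n k = (2 * (n : ℝ) + 1 / 2) * Real.log 2
        - (1 / 2) * Real.log (2 * Real.pi * n) := by rw [b, if_pos hkn]
    have ha : a n k = (2 : ℝ) ^ (-(2 * (n : ℤ))) := by
      rcases abs_eq (by positivity : (0:ℤ) ≤ (n:ℤ)) |>.mp hkn with h | h
      · have ht : ((n : ℤ) + k).toNat = 2 * n := by omega
        rw [a, ht, Nat.choose_self, Nat.cast_one, one_mul]
      · have ht : ((n : ℤ) + k).toNat = 0 := by omega
        rw [a, ht, Nat.choose_zero_right, Nat.cast_one, one_mul]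
    rw [ha, hb]
    have hL : (0:ℝ) < (2 : ℝ) ^ (-(2 * (n : ℤ))) := by positivity
    have hR : (0:ℝ) < (Real.sqrt (π * n))⁻¹ *
        Real.exp (-((2 * (n : ℝ) + 1 / 2) * Real.log 2
          - (1 / 2) * Real.log (2 * Real.pi * n))) := by positivity
    have := Real.log_injOn_pos (Set.mem_Ioi.mpr hL) (Set.mem_Ioi.mpr hR)
    refine le_of_eq (this ?_)
    rw [Real.log_zpow,
      Real.log_mul (by positivity) (Real.exp_ne_zero _), Real.log_inv, Real.log_exp,
      Real.log_sqrt (by positivity : (0:ℝ) ≤ π * n),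
      Real.log_mul (ne_of_gt Real.pi_pos) (ne_of_gt hn0),
      Real.log_mul (by positivity : (2 * π : ℝ) ≠ 0) (ne_of_gt hn0),
      Real.log_mul two_ne_zero (ne_of_gt Real.pi_pos)]
    push_cast
    ring
  · -- interior case
    have hklt : |k| < (n : ℤ) := lt_of_le_of_ne hk hkn
    have habs := abs_lt.mp hklt
    set m : ℕ := ((n : ℤ) + k).toNat with hmdef
    set p : ℕ := 2 * n - m with hpdef
    have hm1 : 1 ≤ m := by omega
    have hmle : m ≤ 2 * n - 1 := by omega
    have hp1 : 1 ≤ p := by omega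
    have hmp : m + p = 2 * n := by omega
    have hmr : (m : ℝ) = (n : ℝ) + (k : ℝ) := by
      have : (m : ℤ) = (n : ℤ) + k := by omega
      exact_mod_cast congrArg (Int.cast : ℤ → ℝ) this
    have hpr : (p : ℝ) = (n : ℝ) - (k : ℝ) := by
      have : (p : ℤ) = (n : ℤ) - k := by omega
      exact_mod_cast congrArg (Int.cast : ℤ → ℝ) this
    have hb : b n k = ((m : ℝ) + 1/2) * Real.log ((m : ℝ) / n)
        + ((p : ℝ) + 1/2) * Real.log ((p : ℝ) / n) := by
      rw [b, if_neg hkn]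
      have e1 : 1 + (k : ℝ) / n = (m : ℝ) / n := by
        rw [hmr]; field_simp
      have e2 : 1 - (k : ℝ) / n = (p : ℝ) / n := by
        rw [hpr]; field_simp
      rw [e1, e2, hmr, hpr]
      field_simp
      ring
    have := key_ineq n m p hm1 hp1 hmp
    rw [hb]
    exact this
end

section
/- For every integer n ≥ 3 and every integer k with |k| ≤ n^{2/3}, one has a_{k,n} ≤ (πn)^{-1/2} · exp(−k²/n) · exp(n^{−1/3}). -/
/-!
Both factors of `a n k = C(2n, n+k) / 4ⁿ` are compared with their Gaussian counterparts.
Wallis' inequality `W n ≥ (2n+1)/(2n+2) · π/2` gives `C(2n, n) ≤ 4ⁿ / √(πn)`. Moving from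
`n + j` to `n + j + 1` in row `2n` multiplies by `(1 - u)/(1 + u)` with `u = (2j+1)/(2n+1)`, and
`log ((1 + u)/(1 - u)) = 2 (u + u³/3 + …) ≥ 2u`, so `C(2n, n+K) ≤ C(2n, n) exp (-2K²/(2n+1))`.
Finally `K²/n - 2K²/(2n+1) ≤ K²/(2n²) ≤ n^(-1/3)` as soon as `K ≤ n^(2/3)`.
-/

open Real

open scoped Nat

namespace Real.Wallis

theorem W_eq_centralBinom (n : ℕ) :
    W n = 16 ^ n / ((n.centralBinom : ℝ) ^ 2 * (2 * n + 1)) := by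
  have hfact : ((2 * n)! : ℝ) = n.centralBinom * n ! * n ! := by
    have := Nat.choose_mul_factorial_mul_factorial (show n ≤ 2 * n by omega)
    rw [show 2 * n - n = n by omega] at this
    exact_mod_cast this.symm
  rw [W_eq_factorial_ratio, hfact, pow_mul]
  field_simp
  norm_num

end Real.Wallis

theorem Nat.centralBinom_le_four_pow_div_sqrt {n : ℕ} (hn : n ≠ 0) :
    (n.centralBinom : ℝ) ≤ 4 ^ n / √(π * n) := by
  have hn0 : (0 : ℝ) < n := by exact_mod_cast Nat.pos_of_ne_zero hn
  have hC : (0 : ℝ) < n.centralBinom := by exact_mod_cast n.centralBinom_pos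
  have hW := Real.Wallis.le_W n
  rw [Real.Wallis.W_eq_centralBinom, _root_.div_mul_div_comm, div_le_div_iff₀ (by positivity)
    (by positivity)] at hW
  rw [le_div_iff₀ (Real.sqrt_pos.2 (by positivity)), ← pow_le_pow_iff_left₀ (by positivity)
    (by positivity) two_ne_zero, mul_pow, sq_sqrt (by positivity), ← pow_mul, mul_comm n 2,
    pow_mul, show (4 : ℝ) ^ 2 = 16 by norm_num]
  -- `le_W` gives `(2n + 1)² C² π ≤ 4 (n + 1) 16ⁿ`, and `4n (n + 1) ≤ (2n + 1)²`
  refine le_of_mul_le_mul_right ?_ (show (0 : ℝ) < 4 * (n + 1) by positivity)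
  nlinarith [mul_pos (pow_pos hC 2) pi_pos]

theorem Real.two_mul_le_log_one_add_sub_log_one_sub {u : ℝ} (h0 : 0 ≤ u) (h1 : u < 1) :
    2 * u ≤ log (1 + u) - log (1 - u) := by
  have hs := hasSum_log_sub_log_of_abs_lt_one (abs_lt.2 ⟨by linarith, h1⟩)
  simpa using le_hasSum hs 0 fun j _ => by positivity

theorem Real.one_sub_div_one_add_le_exp {u : ℝ} (h0 : 0 ≤ u) (h1 : u < 1) :
    (1 - u) / (1 + u) ≤ exp (-(2 * u)) := by
  rw [← exp_log (div_pos (by linarith) (by linarith)), log_div (by linarith) (by linarith)]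
  exact exp_le_exp.2 (by linarith [two_mul_le_log_one_add_sub_log_one_sub h0 h1])

theorem Nat.choose_two_mul_add_succ_le_mul_exp {n K : ℕ} (h : K < n) :
    ((2 * n).choose (n + K + 1) : ℝ) ≤
      (2 * n).choose (n + K) * exp (-(2 * (2 * K + 1)) / (2 * n + 1)) := by
  have hrec : ((2 * n).choose (n + K + 1) : ℝ) * (n + K + 1) =
      (2 * n).choose (n + K) * (n - K) := by
    have := Nat.choose_succ_right_eq (2 * n) (n + K)
    rw [show 2 * n - (n + K) = n - K by omega] at this
    have := congrArg (Nat.cast : ℕ → ℝ) this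
    push_cast [Nat.cast_sub h.le] at this
    exact this
  have hKn : (K : ℝ) + 1 ≤ n := by exact_mod_cast h
  have hu := one_sub_div_one_add_le_exp (u := (2 * K + 1) / (2 * n + 1)) (by positivity)
    ((div_lt_one (by positivity)).2 (by linarith))
  have hratio : (1 - (2 * K + 1) / (2 * n + 1)) / (1 + (2 * K + 1) / (2 * n + 1)) =
      ((n : ℝ) - K) / (n + K + 1) := by
    field_simp
    ring
  rw [hratio, ← mul_div_assoc, ← neg_div] at hu
  calc ((2 * n).choose (n + K + 1) : ℝ) = (2 * n).choose (n + K) * ((n - K) / (n + K + 1)) := by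
        field_simp
        linarith
    _ ≤ _ := by gcongr

theorem Nat.choose_two_mul_add_le_centralBinom_mul_exp (n K : ℕ) :
    ((2 * n).choose (n + K) : ℝ) ≤ n.centralBinom * exp (-(2 * K ^ 2) / (2 * n + 1)) := by
  induction K with
  | zero => simp [Nat.centralBinom]
  | succ K ih =>
    rcases lt_or_ge K n with h | h
    · calc ((2 * n).choose (n + (K + 1)) : ℝ)
          ≤ (2 * n).choose (n + K) * exp (-(2 * (2 * K + 1)) / (2 * n + 1)) :=
            choose_two_mul_add_succ_le_mul_exp h
        _ ≤ n.centralBinom * exp (-(2 * K ^ 2) / (2 * n + 1)) *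
              exp (-(2 * (2 * K + 1)) / (2 * n + 1)) := by gcongr
        _ = n.centralBinom * exp (-(2 * ((K + 1 : ℕ) : ℝ) ^ 2) / (2 * n + 1)) := by
            rw [mul_assoc, ← exp_add]
            push_cast
            ring_nf
    · rw [Nat.choose_eq_zero_of_lt (by omega), Nat.cast_zero]
      positivity

theorem a_eq_choose_natAbs_div {n : ℕ} {k : ℤ} (hk : |k| ≤ n) :
    a n k = (2 * n).choose (n + k.natAbs) / 4 ^ n := by
  have hchoose : (2 * n).choose ((n : ℤ) + k).toNat = (2 * n).choose (n + k.natAbs) := by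
    obtain ⟨hlo, hhi⟩ := abs_le.1 hk
    rcases le_or_gt 0 k with h | h
    · congr 1
      omega
    · exact Nat.choose_symm_of_eq_add (by omega)
  rw [a, hchoose, zpow_neg, show 2 * (n : ℤ) = (2 * n : ℕ) by push_cast; ring, zpow_natCast,
    pow_mul, div_eq_mul_inv]
  norm_num

theorem a_le_inv_sqrt_mul_exp {n : ℕ} (hn : n ≠ 0) {k : ℤ} (hk : |k| ≤ n) :
    a n k ≤ (√(π * n))⁻¹ * exp (-(2 * (k : ℝ) ^ 2) / (2 * n + 1)) := by
  have hsq : ((k.natAbs : ℕ) : ℝ) ^ 2 = (k : ℝ) ^ 2 := by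
    rw [Nat.cast_natAbs, Int.cast_abs, sq_abs]
  rw [a_eq_choose_natAbs_div hk, ← hsq]
  calc ((2 * n).choose (n + k.natAbs) : ℝ) / 4 ^ n
      ≤ n.centralBinom * exp (-(2 * (k.natAbs : ℝ) ^ 2) / (2 * n + 1)) / 4 ^ n := by
        gcongr
        exact Nat.choose_two_mul_add_le_centralBinom_mul_exp n k.natAbs
    _ ≤ 4 ^ n / √(π * n) * exp (-(2 * (k.natAbs : ℝ) ^ 2) / (2 * n + 1)) / 4 ^ n := by
        gcongr
        exact Nat.centralBinom_le_four_pow_div_sqrt hn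
    _ = _ := by field_simp

theorem sq_le_sq_mul_rpow_neg_one_third {x t : ℝ} (hx : 1 ≤ x) (ht : |t| ≤ x ^ ((2 : ℝ) / 3)) :
    t ^ 2 ≤ x ^ 2 * x ^ (-(1 : ℝ) / 3) := by
  have hx0 : 0 ≤ x := by linarith
  calc t ^ 2 = |t| ^ 2 := (sq_abs t).symm
    _ ≤ (x ^ ((2 : ℝ) / 3)) ^ 2 := by gcongr
    _ = x ^ 2 * x ^ (-(2 : ℝ) / 3) := by
        rw [← rpow_natCast, ← rpow_mul hx0, ← rpow_natCast x 2, ← rpow_add (by linarith)]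
        norm_num
    _ ≤ x ^ 2 * x ^ (-(1 : ℝ) / 3) :=
        mul_le_mul_of_nonneg_left (rpow_le_rpow_of_exponent_le hx (by norm_num)) (by positivity)

theorem neg_two_mul_sq_div_le {x t : ℝ} (hx : 1 ≤ x) (ht : |t| ≤ x ^ ((2 : ℝ) / 3)) :
    -(2 * t ^ 2) / (2 * x + 1) ≤ -(t ^ 2 / x) + x ^ (-(1 : ℝ) / 3) := by
  have hsq := sq_le_sq_mul_rpow_neg_one_third hx ht
  have hs : 0 ≤ x ^ (-(1 : ℝ) / 3) := rpow_nonneg (by linarith) _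
  have hgap : t ^ 2 / x - 2 * t ^ 2 / (2 * x + 1) = t ^ 2 / (x * (2 * x + 1)) := by
    field_simp
    ring
  have hbound : t ^ 2 / (x * (2 * x + 1)) ≤ x ^ (-(1 : ℝ) / 3) := by
    rw [div_le_iff₀ (by positivity)]
    nlinarith
  rw [neg_div]
  linarith

theorem stmt_15 (n : ℕ) (hn : 3 ≤ n) (k : ℤ) (hk : (|k| : ℝ) ≤ (n : ℝ) ^ ((2 : ℝ) / 3)) :
    a n k ≤ (Real.sqrt (Real.pi * n))⁻¹ * Real.exp (-((k : ℝ) ^ 2 / n)) *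
      Real.exp ((n : ℝ) ^ (-(1 : ℝ) / 3)) := by
  have hn1 : (1 : ℝ) ≤ n := by exact_mod_cast (show 1 ≤ n by omega)
  have hkn : |k| ≤ n := by
    exact_mod_cast hk.trans (rpow_le_self_of_one_le hn1 (by norm_num))
  calc a n k ≤ (√(π * n))⁻¹ * exp (-(2 * (k : ℝ) ^ 2) / (2 * n + 1)) :=
        a_le_inv_sqrt_mul_exp (by omega) hkn
    _ ≤ (√(π * n))⁻¹ * exp (-((k : ℝ) ^ 2 / n) + (n : ℝ) ^ (-(1 : ℝ) / 3)) := by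
        gcongr
        exact neg_two_mul_sq_div_le hn1 (by exact_mod_cast hk)
    _ = _ := by rw [exp_add, mul_assoc]
end

section
/- For every integer n ≥ 3 and every integer k with |k| ≤ n^{2/3}, one has a_{k,n} > (πn)^{-1/2} · exp(−k²/n) · exp(−1/(7n) − n^{−7/3}/(3(1 − n^{−2/3})²) − n^{−1/3}), and in particular a_{k,n} > (πn)^{-1/2} · exp(−k²/n) · exp(−1.21·n^{−1/3}). -/
/-!
Write `a n k = a n 0 · ∏_{j < |k|} (n - j) / (n + j + 1)` and bound the two factors separately.

With `t = (2j+1)/(2n+1)` the `j`-th factor is `(1 - t)/(1 + t)`, and comparing the series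
`log ((1 + t)/(1 - t)) = 2 ∑ t^(2i+1)/(2i+1)` with a geometric one bounds this logarithm by
`2t + 2t³/(3(1 - t²))`. Summing the odd numbers and their cubes, the product over `j < K = |k|` is
at least `exp (-K²/n - K⁴/(6n³(1 - (K/n)²)))`, and for `K ≤ n^(2/3)` the second term is at most
`n^(-1/3)`.

For the central term, `n c_n² e^(2/(7n))` with `c_n = C(2n, n)/4^n` decreases strictly, because
`(2n+1)²/(4n(n+1)) = 1 + 1/(4n(n+1)) < e^(2/(7n(n+1)))`, and it tends to `1/π` by Wallis' product;
hence `c_n > e^(-1/(7n))/√(πn)`. Together, `a n k > (πn)^(-1/2) e^(-k²/n) e^(-1/(7n) - n^(-1/3))`,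
which implies both bounds since `1/(7n) ≤ n^(-1/3)/7`.
-/

open Real

open Finset Filter Topology

theorem log_one_add_sub_log_one_sub_le {t : ℝ} (h0 : 0 ≤ t) (h1 : t < 1) :
    log (1 + t) - log (1 - t) ≤ 2 * t + 2 * t ^ 3 / (3 * (1 - t ^ 2)) := by
  have hseries := hasSum_log_sub_log_of_abs_lt_one (abs_lt.2 ⟨by linarith, h1⟩)
  rw [← hasSum_nat_add_iff' 1] at hseries
  have hgeom := (hasSum_geometric_of_lt_one (sq_nonneg t) (by nlinarith)).mul_left (2 * t ^ 3 / 3)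
  have htail := hasSum_le (fun k => ?_) hseries hgeom
  · simp only [range_one, sum_singleton, CharP.cast_eq_zero] at htail
    rw [← div_eq_mul_inv, div_div] at htail
    norm_num at htail
    linarith
  · have hk : (3 : ℝ) ≤ 2 * ((k + 1 : ℕ) : ℝ) + 1 := by push_cast; linarith [k.cast_nonneg (α := ℝ)]
    rw [show 2 * (k + 1) + 1 = 3 + 2 * k by ring, pow_add, pow_mul]
    have hpow : 0 ≤ t ^ 3 * (t ^ 2) ^ k := by positivity
    calc 2 * (1 / (2 * ((k + 1 : ℕ) : ℝ) + 1)) * (t ^ 3 * (t ^ 2) ^ k)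
        ≤ 2 * (1 / 3) * (t ^ 3 * (t ^ 2) ^ k) := by gcongr
      _ = 2 * t ^ 3 / 3 * (t ^ 2) ^ k := by ring

theorem exp_neg_le_one_sub_div_one_add {t s : ℝ} (h0 : 0 ≤ t) (hts : t ^ 2 ≤ s) (hs : s < 1) :
    exp (-(2 * t + 2 * t ^ 3 / (3 * (1 - s)))) ≤ (1 - t) / (1 + t) := by
  have ht1 : t < 1 := by nlinarith
  have hlog := log_one_add_sub_log_one_sub_le h0 ht1
  have hcube : 2 * t ^ 3 / (3 * (1 - t ^ 2)) ≤ 2 * t ^ 3 / (3 * (1 - s)) := by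
    gcongr
  rw [← exp_log (show 0 < (1 - t) / (1 + t) by apply div_pos <;> linarith),
    log_div (by linarith) (by linarith)]
  exact exp_le_exp.2 (by linarith)

theorem sum_range_two_mul_add_one (K : ℕ) : ∑ j ∈ range K, (2 * (j : ℝ) + 1) = K ^ 2 := by
  induction K with
  | zero => simp
  | succ K ih => rw [sum_range_succ, ih]; push_cast; ring

theorem sum_range_two_mul_add_one_pow_three (K : ℕ) :
    ∑ j ∈ range K, (2 * (j : ℝ) + 1) ^ 3 = (K : ℝ) ^ 2 * (2 * K ^ 2 - 1) := by
  induction K with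
  | zero => simp
  | succ K ih => rw [sum_range_succ, ih]; push_cast; ring

theorem sub_div_add_add_one_eq {x y : ℝ} (hx : 2 * x + 1 ≠ 0) :
    (x - y) / (x + y + 1) = (1 - (2 * y + 1) / (2 * x + 1)) / (1 + (2 * y + 1) / (2 * x + 1)) := by
  rw [one_sub_div hx, one_add_div hx, div_div_div_cancel_right₀ hx,
    show 2 * x + 1 - (2 * y + 1) = 2 * (x - y) by ring,
    show 2 * x + 1 + (2 * y + 1) = 2 * (x + y + 1) by ring, mul_div_mul_left _ _ two_ne_zero]

theorem exp_neg_le_prod_sub_div_add {x : ℝ} {K : ℕ} (hK : (K : ℝ) < x) :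
    exp (-(K ^ 2 / x) - K ^ 4 / (6 * x ^ 3 * (1 - (K / x) ^ 2)))
      ≤ ∏ j ∈ range K, (x - j) / (x + j + 1) := by
  have hK0 : (0 : ℝ) ≤ K := K.cast_nonneg
  have hx : 0 < x := hK0.trans_lt hK
  set s := (K / x) ^ 2 with hs_def
  have hs : s < 1 := by
    rw [hs_def, div_pow, div_lt_one (by positivity)]
    exact pow_lt_pow_left₀ hK hK0 two_ne_zero
  set t : ℕ → ℝ := fun j => (2 * j + 1) / (2 * x + 1) with ht_def
  have hterm : ∀ j ∈ range K,
      exp (-(2 * t j + 2 * t j ^ 3 / (3 * (1 - s)))) ≤ (x - j) / (x + j + 1) := by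
    intro j hj
    have hj : (j : ℝ) + 1 ≤ K := by exact_mod_cast mem_range.1 hj
    have htK : t j ≤ K / x := by
      rw [div_le_div_iff₀ (by positivity) hx]
      nlinarith
    rw [sub_div_add_add_one_eq (by positivity)]
    exact exp_neg_le_one_sub_div_one_add (by positivity) (pow_le_pow_left₀ (by positivity) htK 2) hs
  have hsum : ∑ j ∈ range K, (2 * t j + 2 * t j ^ 3 / (3 * (1 - s)))
      = 2 / (2 * x + 1) * K ^ 2
        + 2 / ((2 * x + 1) ^ 3 * (3 * (1 - s))) * (K ^ 2 * (2 * K ^ 2 - 1)) := by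
    rw [← sum_range_two_mul_add_one_pow_three, ← sum_range_two_mul_add_one, mul_sum, mul_sum,
      ← sum_add_distrib]
    refine sum_congr rfl fun j _ => ?_
    simp only [ht_def]
    field_simp
  have hmain : 2 / (2 * x + 1) * K ^ 2 ≤ K ^ 2 / x := by
    rw [div_mul_eq_mul_div, div_le_div_iff₀ (by positivity) hx]
    nlinarith
  have herr : 2 / ((2 * x + 1) ^ 3 * (3 * (1 - s))) * (K ^ 2 * (2 * K ^ 2 - 1))
      ≤ K ^ 4 / (6 * x ^ 3 * (1 - s)) :=
    calc 2 / ((2 * x + 1) ^ 3 * (3 * (1 - s))) * (K ^ 2 * (2 * K ^ 2 - 1))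
        ≤ 4 * K ^ 4 / ((2 * x) ^ 3 * (3 * (1 - s))) := by
          rw [div_mul_eq_mul_div]
          exact div_le_div₀ (by positivity) (by nlinarith)
            (mul_pos (by positivity) (by linarith)) (by gcongr; linarith)
      _ = K ^ 4 / (6 * x ^ 3 * (1 - s)) := by field_simp; ring
  calc exp (-(K ^ 2 / x) - K ^ 4 / (6 * x ^ 3 * (1 - s)))
      ≤ exp (-∑ j ∈ range K, (2 * t j + 2 * t j ^ 3 / (3 * (1 - s)))) :=
        exp_le_exp.2 (by rw [hsum]; linarith)
    _ = ∏ j ∈ range K, exp (-(2 * t j + 2 * t j ^ 3 / (3 * (1 - s)))) := by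
        rw [← sum_neg_distrib, exp_sum]
    _ ≤ _ := prod_le_prod (fun _ _ => (exp_pos _).le) hterm

theorem centralBinom_div_four_pow_succ (n : ℕ) :
    ((n + 1).centralBinom : ℝ) / 4 ^ (n + 1)
      = n.centralBinom / 4 ^ n * ((2 * n + 1) / (2 * n + 2)) := by
  have h := congrArg (Nat.cast : ℕ → ℝ) (Nat.succ_mul_centralBinom_succ n)
  push_cast at h
  rw [mul_comm, ← eq_div_iff (by positivity)] at h
  rw [h, pow_succ]
  field_simp
  ring

theorem sq_centralBinom_div_four_pow_mul_wallis (n : ℕ) :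
    ((n.centralBinom : ℝ) / 4 ^ n) ^ 2 * (2 * n + 1) * Wallis.W n = 1 := by
  induction n with
  | zero => simp [Wallis.W]
  | succ n ih =>
    convert ih using 1
    rw [centralBinom_div_four_pow_succ, Wallis.W_succ]
    push_cast
    field_simp
    ring

noncomputable def centralBinomSeq (n : ℕ) : ℝ :=
  ((n.centralBinom : ℝ) / 4 ^ n) ^ 2 * n * exp (2 / (7 * n))

theorem centralBinomSeq_succ_lt {n : ℕ} (hn : 0 < n) :
    centralBinomSeq (n + 1) < centralBinomSeq n := by
  have hN : (1 : ℝ) ≤ n := by exact_mod_cast hn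
  have hexp : exp (2 / (7 * (n + 1))) * exp (2 / (7 * n * (n + 1))) = exp (2 / (7 * n)) := by
    rw [← exp_add]
    congr 1
    field_simp
  have hgrowth : (2 * n + 1) ^ 2 / (4 * n * (n + 1)) < exp (2 / (7 * n * (n + 1))) := by
    calc ((2 : ℝ) * n + 1) ^ 2 / (4 * n * (n + 1)) < 2 / (7 * n * (n + 1)) + 1 := by
          rw [div_lt_iff₀ (by positivity)]
          field_simp
          nlinarith
      _ ≤ exp (2 / (7 * n * (n + 1))) := add_one_le_exp _
  have hc : 0 < (n.centralBinom : ℝ) / 4 ^ n := by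
    have := n.centralBinom_pos
    positivity
  unfold centralBinomSeq
  rw [centralBinom_div_four_pow_succ, ← hexp]
  push_cast
  calc ((n.centralBinom : ℝ) / 4 ^ n * ((2 * n + 1) / (2 * n + 2))) ^ 2 * (n + 1)
        * exp (2 / (7 * (n + 1)))
      = ((n.centralBinom : ℝ) / 4 ^ n) ^ 2 * n * exp (2 / (7 * (n + 1)))
        * ((2 * n + 1) ^ 2 / (4 * n * (n + 1))) := by
        field_simp
        ring
    _ < ((n.centralBinom : ℝ) / 4 ^ n) ^ 2 * n * exp (2 / (7 * (n + 1)))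
        * exp (2 / (7 * n * (n + 1))) := by gcongr
    _ = _ := by ring

theorem tendsto_centralBinomSeq : Tendsto centralBinomSeq atTop (𝓝 π⁻¹) := by
  have hseq : centralBinomSeq
      = fun n : ℕ => (n : ℝ) / (2 * n + 1) * exp (2 / 7 / n) / Wallis.W n := by
    ext n
    have h := sq_centralBinom_div_four_pow_mul_wallis n
    have hW := Wallis.W_pos n
    rw [mul_assoc, ← eq_div_iff (by positivity)] at h
    unfold centralBinomSeq
    rw [h, div_div]
    field_simp
  have hexp : Tendsto (fun n : ℕ => exp (2 / 7 / n)) atTop (𝓝 1) := by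
    simpa [Function.comp_def] using
      (continuous_exp.tendsto 0).comp (tendsto_const_div_atTop_nhds_zero_nat (2 / 7))
  rw [hseq, show π⁻¹ = 1 / 2 * 1 / (π / 2) by field_simp]
  exact (Stirling.tendsto_self_div_two_mul_self_add_one.mul hexp).div
    Wallis.tendsto_W_nhds_pi_div_two (by positivity)

theorem inv_pi_lt_centralBinomSeq {n : ℕ} (hn : 0 < n) : π⁻¹ < centralBinomSeq n := by
  obtain ⟨m, rfl⟩ : ∃ m, n = m + 1 := ⟨n - 1, by omega⟩
  have hanti : StrictAnti fun m => centralBinomSeq (m + 1) :=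
    strictAnti_nat_of_succ_lt fun m => centralBinomSeq_succ_lt m.succ_pos
  have hlim := tendsto_centralBinomSeq.comp (tendsto_add_atTop_nat 1)
  exact (hanti.antitone.le_of_tendsto hlim (m + 1)).trans_lt (hanti (lt_add_one m))

theorem exp_neg_div_sqrt_lt_centralBinom_div_four_pow {n : ℕ} (hn : 0 < n) :
    exp (-(1 / (7 * n))) / sqrt (π * n) < n.centralBinom / 4 ^ n := by
  have hN : (0 : ℝ) < n := by exact_mod_cast hn
  have hseq := inv_pi_lt_centralBinomSeq hn
  unfold centralBinomSeq at hseq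
  refine lt_of_pow_lt_pow_left₀ 2 (by positivity) ?_
  rw [div_pow, sq_sqrt (by positivity), ← exp_nat_mul, div_lt_iff₀ (by positivity)]
  rw [inv_lt_iff_one_lt_mul₀ pi_pos] at hseq
  rw [show ((2 : ℕ) : ℝ) * -(1 / (7 * n)) = -(2 / (7 * n)) by push_cast; ring, exp_neg,
    inv_lt_iff_one_lt_mul₀ (exp_pos _)]
  linarith

theorem a_eq_choose_div (n : ℕ) (k : ℤ) :
    a n k = ((2 * n).choose ((n : ℤ) + k).toNat : ℝ) / 4 ^ n := by
  rw [a, div_eq_mul_inv, zpow_neg, mul_comm 2, zpow_mul, zpow_natCast]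
  norm_num

theorem a_zero (n : ℕ) : a n 0 = n.centralBinom / 4 ^ n := by
  rw [a_eq_choose_div, add_zero, Int.toNat_natCast, Nat.centralBinom]

theorem a_natAbs {n : ℕ} {k : ℤ} (hk : k.natAbs ≤ n) : a n k = a n k.natAbs := by
  rcases Int.natAbs_eq k with hpos | hneg
  · rw [← hpos]
  · rw [a_eq_choose_div, a_eq_choose_div, ← Nat.choose_symm (by omega)]
    congr 3
    omega

theorem a_natCast_succ {n K : ℕ} (hK : K < n) :
    a n (K + 1 : ℕ) = a n K * ((n - K) / (n + K + 1)) := by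
  have h := congrArg (Nat.cast : ℕ → ℝ) (Nat.choose_succ_right_eq (2 * n) (n + K))
  rw [show 2 * n - (n + K) = n - K by omega] at h
  push_cast [Nat.cast_sub hK.le] at h
  rw [← eq_div_iff (by positivity)] at h
  rw [a_eq_choose_div, a_eq_choose_div, show ((n : ℤ) + (K + 1 : ℕ)).toNat = n + K + 1 by omega,
    show ((n : ℤ) + K).toNat = n + K by omega, h]
  ring

theorem a_natCast_eq_mul_prod {n K : ℕ} (hK : K ≤ n) :
    a n K = a n 0 * ∏ j ∈ range K, ((n : ℝ) - j) / (n + j + 1) := by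
  induction K with
  | zero => simp
  | succ K ih => rw [a_natCast_succ hK, ih (by omega), prod_range_succ, mul_assoc]

theorem pow_four_div_le_rpow {x y : ℝ} (hx : 2 ≤ x) (hy0 : 0 ≤ y) (hy : y ≤ x ^ ((2 : ℝ) / 3)) :
    y ^ 4 / (6 * x ^ 3 * (1 - (y / x) ^ 2)) ≤ x ^ (-(1 : ℝ) / 3) := by
  have hx0 : 0 < x := by linarith
  set u := x ^ (-(1 : ℝ) / 3) with hu_def
  have hu0 : 0 < u := rpow_pos_of_pos hx0 _
  have hu3 : x * u ^ 3 = 1 := by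
    rw [← rpow_natCast, ← rpow_mul hx0.le]
    norm_num [rpow_neg_one, hx0.ne']
  have hu2 : u ^ 2 ≤ 5 / 6 := by
    have hu45 : u ≤ 4 / 5 := by
      by_contra! h
      nlinarith [pow_lt_pow_left₀ h (by norm_num) three_ne_zero]
    nlinarith
  have hyu : y ≤ x * u := by
    rwa [hu_def, ← rpow_one_add' hx0.le (by norm_num), show 1 + -(1 : ℝ) / 3 = 2 / 3 by norm_num]
  have hy4 : y ^ 4 ≤ x ^ 3 * u :=
    calc y ^ 4 ≤ (x * u) ^ 4 := by gcongr
      _ = x ^ 3 * u * (x * u ^ 3) := by ring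
      _ = x ^ 3 * u := by rw [hu3, mul_one]
  have hyu' : y / x ≤ u := by rw [div_le_iff₀ hx0]; linarith
  calc y ^ 4 / (6 * x ^ 3 * (1 - (y / x) ^ 2)) ≤ x ^ 3 * u / (6 * x ^ 3 * (1 - u ^ 2)) :=
        div_le_div₀ (by positivity) hy4 (mul_pos (by positivity) (by linarith)) (by gcongr)
    _ = u / (6 * (1 - u ^ 2)) := by field_simp
    _ ≤ u := by rw [div_le_iff₀ (by linarith)]; nlinarith

theorem lt_a_of_abs_le_rpow {n : ℕ} (hn : 2 ≤ n) {k : ℤ}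
    (hk : (|k| : ℝ) ≤ (n : ℝ) ^ ((2 : ℝ) / 3)) :
    (sqrt (π * n))⁻¹ * exp (-((k : ℝ) ^ 2 / n))
        * exp (-(1 / (7 * (n : ℝ))) - (n : ℝ) ^ (-(1 : ℝ) / 3)) < a n k := by
  have hN : (2 : ℝ) ≤ n := by exact_mod_cast hn
  set K := k.natAbs
  have hkK : (|k| : ℝ) = K := by rw [Nat.cast_natAbs, Int.cast_abs]
  rw [hkK] at hk
  have hKn : (K : ℝ) < n := hk.trans_lt (rpow_lt_self_of_one_lt (by linarith) (by norm_num))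
  have hKn' : K ≤ n := by exact_mod_cast hKn.le
  rw [a_natAbs hKn', a_natCast_eq_mul_prod hKn', a_zero, ← sq_abs, hkK]
  calc (sqrt (π * n))⁻¹ * exp (-(K ^ 2 / n)) * exp (-(1 / (7 * (n : ℝ))) - n ^ (-(1 : ℝ) / 3))
      = exp (-(1 / (7 * n))) / sqrt (π * n) * exp (-(K ^ 2 / n) - n ^ (-(1 : ℝ) / 3)) := by
        rw [sub_eq_add_neg, exp_add, sub_eq_add_neg, exp_add]
        ring
    _ < n.centralBinom / 4 ^ n * exp (-(K ^ 2 / n) - n ^ (-(1 : ℝ) / 3)) := by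
        gcongr ?_ * _
        exact exp_neg_div_sqrt_lt_centralBinom_div_four_pow (by omega)
    _ ≤ n.centralBinom / 4 ^ n * exp (-(K ^ 2 / n) - K ^ 4 / (6 * n ^ 3 * (1 - (K / n) ^ 2))) := by
        gcongr
        exact pow_four_div_le_rpow hN K.cast_nonneg hk
    _ ≤ n.centralBinom / 4 ^ n * ∏ j ∈ range K, ((n : ℝ) - j) / (n + j + 1) := by
        gcongr
        exact exp_neg_le_prod_sub_div_add hKn

theorem stmt_16 (n : ℕ) (hn : 3 ≤ n) (k : ℤ) (hk : (|k| : ℝ) ≤ (n : ℝ) ^ ((2 : ℝ) / 3)) :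
    a n k > (Real.sqrt (Real.pi * n))⁻¹ * Real.exp (-((k : ℝ) ^ 2 / n)) *
      Real.exp (-(1 / (7 * (n : ℝ)))
        - (n : ℝ) ^ (-(7 : ℝ) / 3) / (3 * (1 - (n : ℝ) ^ (-(2 : ℝ) / 3)) ^ 2)
        - (n : ℝ) ^ (-(1 : ℝ) / 3)) ∧
    a n k > (Real.sqrt (Real.pi * n))⁻¹ * Real.exp (-((k : ℝ) ^ 2 / n)) *
      Real.exp (-(1.21 * (n : ℝ) ^ (-(1 : ℝ) / 3))) := by
  have hbound := lt_a_of_abs_le_rpow (by omega) hk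
  constructor
  · refine lt_of_le_of_lt ?_ hbound
    gcongr
    have hcorr : 0 ≤ (n : ℝ) ^ (-(7 : ℝ) / 3) / (3 * (1 - (n : ℝ) ^ (-(2 : ℝ) / 3)) ^ 2) := by
      positivity
    linarith
  · refine lt_of_le_of_lt ?_ hbound
    gcongr
    have hinv : (n : ℝ)⁻¹ ≤ (n : ℝ) ^ (-(1 : ℝ) / 3) := by
      rw [← rpow_neg_one]
      exact rpow_le_rpow_of_exponent_le (by exact_mod_cast (by omega : 1 ≤ n)) (by norm_num)
    have hu0 : 0 ≤ (n : ℝ) ^ (-(1 : ℝ) / 3) := by positivity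
    rw [one_div, mul_inv]
    linarith
end
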